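/- arXiv:2401.00569 — 9 statements merged into one kernel-verified Lean document; each statement's English description precedes it below -/
import Mathlib

section
/- For every q ∈ [0,1] one has min( ρ·V_B(q) − λ·( q·h + (1−q)·(μ−R) − V_B(q) ) − ρ·( q·h + (1−q)·l ), V_B(q) − (μ−R) ) = 0; moreover V_B(0) = μ−R and V_B(1) = h. -/
set_option autoImplicit false

/-- The nested continuation value function `V_B` for the Poisson signal
satisfies the variational equality
`min(ρ V_B(q) − λ(q h + (1−q)(μ−R) − V_B(q)) − ρ(q h + (1−q) l), V_B(q) − (μ−R)) = 0`
on `[0,1]`, together with the boundary conditions `V_B(0) = μ − R` and `V_B(1) = h`. -/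
theorem stmt_1 (l μ h ρ lam R : ℝ)
    (hl : 0 < l) (hlμ : l < μ) (hμh : μ < h) (hρ : 0 < ρ) (hlam : 0 < lam)
    (hR : 0 < R) (hlR : l < μ - R)
    (ltil qB : ℝ)
    (hltil : ltil = (ρ / (ρ + lam)) * l + (lam / (ρ + lam)) * (μ - R))
    (hqB : qB = ρ * (μ - l - R) / (lam * (h - μ + R) + ρ * (h - l)))
    (VB : ℝ → ℝ)
    (hVB1 : ∀ q : ℝ, q ≤ qB → VB q = μ - R)
    (hVB2 : ∀ q : ℝ, qB < q → VB q = q * h + (1 - q) * ltil) :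
    (∀ q ∈ Set.Icc (0 : ℝ) 1,
      min (ρ * VB q - lam * (q * h + (1 - q) * (μ - R) - VB q) - ρ * (q * h + (1 - q) * l))
        (VB q - (μ - R)) = 0)
    ∧ VB 0 = μ - R ∧ VB 1 = h := by
  have hD : 0 < lam * (h - μ + R) + ρ * (h - l) := by nlinarith
  have hsum : 0 < ρ + lam := by linarith
  have hqB' : qB * (lam * (h - μ + R) + ρ * (h - l)) = ρ * (μ - l - R) := by
    rw [hqB]; field_simp
  have hltilval : ltil * (ρ + lam) = ρ * l + lam * (μ - R) := by
    rw [hltil]; field_simp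
  have hqBpos : 0 < qB := by
    rw [hqB]; exact div_pos (by nlinarith) hD
  have hqB1 : qB < 1 := by
    rw [hqB]; rw [div_lt_one hD]; nlinarith
  have hcont : qB * h + (1 - qB) * ltil = μ - R := by
    have h1 : (qB * h + (1 - qB) * ltil - (μ - R)) * (ρ + lam) = 0 := by
      linear_combination hqB' + (1 - qB) * hltilval
    have := mul_eq_zero.mp h1
    rcases this with h2 | h2
    · linarith
    · exact absurd h2 (by linarith)
  have hlth : ltil < h := by nlinarith
  refine ⟨?_, hVB1 0 hqBpos.le, by rw [hVB2 1 hqB1]; ring⟩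
  intro q hq
  rcases le_or_gt q qB with hle | hgt
  · rw [hVB1 q hle]
    have h0 : μ - R - (μ - R) = 0 := by ring
    rw [h0, min_eq_right]
    have hF : ρ * (μ - R) - lam * (q * h + (1 - q) * (μ - R) - (μ - R)) -
        ρ * (q * h + (1 - q) * l) = (qB - q) * (lam * (h - μ + R) + ρ * (h - l)) := by
      linear_combination -hqB'
    rw [hF]
    exact mul_nonneg (by linarith) hD.le
  · rw [hVB2 q hgt]
    have hE1 : ρ * (q * h + (1 - q) * ltil) -
        lam * (q * h + (1 - q) * (μ - R) - (q * h + (1 - q) * ltil)) -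
        ρ * (q * h + (1 - q) * l) = 0 := by
      linear_combination (1 - q) * hltilval
    rw [hE1, min_eq_left]
    have hE2 : q * h + (1 - q) * ltil - (μ - R) = (q - qB) * (h - ltil) := by
      linear_combination hcont
    rw [hE2]
    exact mul_nonneg (by linarith) (by linarith)
end

section
/- Let d ∈ ℝ and define W_d(q) := q·h + (1−q)·l + d·q^{(1−k̃)/2}·(1−q)^{(1+k̃)/2} for q ∈ (0,1). Then W_d is twice differentiable on (0,1) and satisfies ρ·W_d(q) − (1/2)·((h−l)/σ̃)²·q²·(1−q)²·W_d''(q) − ρ·( q·h + (1−q)·l ) = 0 for every q ∈ (0,1). -/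
/-!
Write `W_d = L + d F` with `L(q) = q h + (1 - q) l` affine and `F(q) = q^a (1 - q)^b`. A direct
computation gives the Euler-type identity `q² (1 - q)² F'' = a (a - 1) F` whenever `a + b = 1`, and for
`a = (1 - k̃)/2` the constant `a (a - 1) = (k̃² - 1)/4 = 2ρ (σ̃/(h - l))²` exactly cancels the
coefficient `½ ((h - l)/σ̃)²` against `ρ`. Since `L'' = 0`, the equation reduces to `ρ d F = ρ d F`.
-/

open Set Filter Topology

section PowerProduct

variable {a b x : ℝ}

lemma hasDerivAt_rpow_mul_one_sub_rpow (hx : x ∈ Ioo (0 : ℝ) 1) :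
    HasDerivAt (fun y : ℝ => y ^ a * (1 - y) ^ b)
      (a * x ^ (a - 1) * (1 - x) ^ b - b * x ^ a * (1 - x) ^ (b - 1)) x := by
  have hx₀ : x ≠ 0 := hx.1.ne'
  have hx₁ : 1 - x ≠ 0 := (sub_pos.mpr hx.2).ne'
  have hleft : HasDerivAt (fun y : ℝ => y ^ a) (a * x ^ (a - 1)) x :=
    Real.hasDerivAt_rpow_const (Or.inl hx₀)
  have hright : HasDerivAt (fun y : ℝ => (1 - y) ^ b) (b * (1 - x) ^ (b - 1) * (-1)) x :=
    (Real.hasDerivAt_rpow_const (Or.inl hx₁)).comp x ((hasDerivAt_id x).const_sub 1)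
  exact (hleft.mul hright).congr_deriv (by ring)

lemma deriv_rpow_mul_one_sub_rpow_eventuallyEq (hx : x ∈ Ioo (0 : ℝ) 1) :
    deriv (fun y : ℝ => y ^ a * (1 - y) ^ b) =ᶠ[𝓝 x]
      fun y => a * y ^ (a - 1) * (1 - y) ^ b - b * y ^ a * (1 - y) ^ (b - 1) :=
  (isOpen_Ioo.eventually_mem hx).mono fun _ hy => (hasDerivAt_rpow_mul_one_sub_rpow hy).deriv

lemma hasDerivAt_deriv_rpow_mul_one_sub_rpow (hx : x ∈ Ioo (0 : ℝ) 1) :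
    HasDerivAt (deriv fun y : ℝ => y ^ a * (1 - y) ^ b)
      (a * ((a - 1) * x ^ (a - 1 - 1) * (1 - x) ^ b - b * x ^ (a - 1) * (1 - x) ^ (b - 1))
        - b * (a * x ^ (a - 1) * (1 - x) ^ (b - 1) - (b - 1) * x ^ a * (1 - x) ^ (b - 1 - 1))) x := by
  refine HasDerivAt.congr_of_eventuallyEq ?_ (deriv_rpow_mul_one_sub_rpow_eventuallyEq hx)
  have h := ((hasDerivAt_rpow_mul_one_sub_rpow (a := a - 1) (b := b) hx).const_mul a).sub
    ((hasDerivAt_rpow_mul_one_sub_rpow (a := a) (b := b - 1) hx).const_mul b)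
  simp only [mul_assoc] at h ⊢
  exact h

lemma sq_mul_sq_mul_deriv_deriv_rpow_mul_one_sub_rpow (hx : x ∈ Ioo (0 : ℝ) 1) :
    x ^ 2 * (1 - x) ^ 2 * deriv (deriv fun y : ℝ => y ^ a * (1 - y) ^ b) x
      = (a * (a - 1) * (1 - x) ^ 2 - 2 * a * b * x * (1 - x) + b * (b - 1) * x ^ 2)
        * (x ^ a * (1 - x) ^ b) := by
  have hx₀ : x ≠ 0 := hx.1.ne'
  have hx₁ : 1 - x ≠ 0 := (sub_pos.mpr hx.2).ne'
  rw [(hasDerivAt_deriv_rpow_mul_one_sub_rpow hx).deriv]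
  simp only [Real.rpow_sub_one hx₀, Real.rpow_sub_one hx₁]
  field_simp
  ring

lemma sq_mul_sq_mul_deriv_deriv_rpow_mul_one_sub_rpow_of_add_eq_one (hab : a + b = 1)
    (hx : x ∈ Ioo (0 : ℝ) 1) :
    x ^ 2 * (1 - x) ^ 2 * deriv (deriv fun y : ℝ => y ^ a * (1 - y) ^ b) x
      = a * (a - 1) * (x ^ a * (1 - x) ^ b) := by
  rw [sq_mul_sq_mul_deriv_deriv_rpow_mul_one_sub_rpow hx, eq_sub_of_add_eq' hab]
  ring

end PowerProduct

lemma deriv_affine_add_const_mul_eventuallyEq {f : ℝ → ℝ} {x h l d : ℝ}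
    (hf : ∀ᶠ y in 𝓝 x, DifferentiableAt ℝ f y) :
    deriv (fun y => y * h + (1 - y) * l + d * f y) =ᶠ[𝓝 x] fun y => h - l + d * deriv f y :=
  hf.mono fun y hy =>
    ((((hasDerivAt_id y).mul_const h).add (((hasDerivAt_id y).const_sub 1).mul_const l)).add
      (hy.hasDerivAt.const_mul d)).deriv.trans (by ring)

lemma inv_sq_mul_sqrt_sq_sub_one {c ρ : ℝ} (hc : c ≠ 0) (hρ : 0 ≤ ρ) :
    c⁻¹ ^ 2 * (√(1 + 8 * ρ * c ^ 2) ^ 2 - 1) = 8 * ρ := by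
  rw [Real.sq_sqrt (by positivity)]
  field_simp
  ring

/-- `W_d(q) = q h + (1−q) l + d q^{(1−k̃)/2}(1−q)^{(1+k̃)/2}`, with
`k̃ = √(1 + 8ρ(σ̃/(h−l))²)`, is twice differentiable on `(0,1)` and solves
`ρ W_d(q) − ½((h−l)/σ̃)² q²(1−q)² W_d''(q) − ρ(q h + (1−q) l) = 0` there. -/
theorem stmt_7 (l h ρ σt d : ℝ)
    (hlh : l < h) (hρ : 0 < ρ) (hσt : 0 < σt)
    (kt : ℝ) (hkt : kt = Real.sqrt (1 + 8 * ρ * (σt / (h - l)) ^ 2))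
    (W : ℝ → ℝ)
    (hW : ∀ q : ℝ, W q = q * h + (1 - q) * l
      + d * q ^ ((1 - kt) / 2) * (1 - q) ^ ((1 + kt) / 2)) :
    ∀ q ∈ Set.Ioo (0 : ℝ) 1,
      DifferentiableAt ℝ W q ∧ DifferentiableAt ℝ (deriv W) q ∧
      ρ * W q - (1 / 2) * ((h - l) / σt) ^ 2 * q ^ 2 * (1 - q) ^ 2 * deriv (deriv W) q
        - ρ * (q * h + (1 - q) * l) = 0 := by
  intro q hq
  set F : ℝ → ℝ := fun y => y ^ ((1 - kt) / 2) * (1 - y) ^ ((1 + kt) / 2)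
  have hWF : W = fun y => y * h + (1 - y) * l + d * F y := funext fun y => by rw [hW]; ring
  have hF : ∀ᶠ y in 𝓝 q, DifferentiableAt ℝ F y := (isOpen_Ioo.eventually_mem hq).mono
    fun y hy => (hasDerivAt_rpow_mul_one_sub_rpow hy).differentiableAt
  have hW' : deriv W =ᶠ[𝓝 q] fun y => h - l + d * deriv F y :=
    hWF ▸ deriv_affine_add_const_mul_eventuallyEq hF
  have hW'' : HasDerivAt (deriv W) (d * deriv (deriv F) q) q :=
    (((hasDerivAt_deriv_rpow_mul_one_sub_rpow hq).differentiableAt.hasDerivAt.const_mul d).const_add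
      (h - l)).congr_of_eventuallyEq hW'
  refine ⟨?_, hW''.differentiableAt, ?_⟩
  · have hFq := hF.self_of_nhds
    rw [hWF]
    fun_prop
  rw [hW''.deriv, hW q]
  have hEuler := sq_mul_sq_mul_deriv_deriv_rpow_mul_one_sub_rpow_of_add_eq_one
    (a := (1 - kt) / 2) (b := (1 + kt) / 2) (by ring) hq
  have hk := inv_sq_mul_sqrt_sq_sub_one (div_ne_zero hσt.ne' (sub_ne_zero.2 hlh.ne')) hρ.le
  rw [inv_div, ← hkt] at hk
  linear_combination (-(1 / 2) * ((h - l) / σt) ^ 2 * d) * hEuler - (d * F q / 8) * hk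
end

section
/- One has d_B > 0; equivalently, q_B·(h−l) < μ − R − l. -/
set_option autoImplicit false

/-- `d_B > 0`; equivalently, `q_B (h−l) < μ − R − l`. -/
theorem stmt_10 (l μ h ρ σt R : ℝ)
    (hl : 0 < l) (hlμ : l < μ) (hμh : μ < h) (hρ : 0 < ρ) (hσt : 0 < σt)
    (hR : 0 < R) (hlR : l < μ - R)
    (kt qB dB : ℝ)
    (hkt : kt = Real.sqrt (1 + 8 * ρ * (σt / (h - l)) ^ 2))
    (hqB : qB = (l - μ + R) * ((1 - kt) / 2)
      / ((h - l) * ((1 + kt) / 2) + l - μ + R))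
    (hdB : dB = (μ - R - qB * h - (1 - qB) * l)
      / (qB ^ ((1 - kt) / 2) * (1 - qB) ^ ((1 + kt) / 2))) :
    0 < dB ∧ qB * (h - l) < μ - R - l := by
  have hb : (0:ℝ) < h - l := by linarith
  have ha : (0:ℝ) < μ - R - l := by linarith
  have hab : μ - R - l < h - l := by linarith
  have hd : 0 < σt / (h - l) := div_pos hσt hb
  have harg : (1:ℝ) < 1 + 8 * ρ * (σt / (h - l)) ^ 2 := by nlinarith [pow_pos hd 2]
  have hkt1 : 1 < kt := by
    rw [hkt, show (1:ℝ) = Real.sqrt 1 from Real.sqrt_one.symm]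
    exact Real.sqrt_lt_sqrt (by norm_num) (by rw [Real.sqrt_one]; exact harg)
  have hD : 0 < (h - l) * ((1 + kt) / 2) + l - μ + R := by
    nlinarith [mul_pos hb (by linarith : (0:ℝ) < (kt - 1) / 2)]
  have hqpos : 0 < qB := by
    rw [hqB]
    apply div_pos _ hD
    nlinarith [mul_pos ha (by linarith : (0:ℝ) < (kt - 1) / 2)]
  have key : qB * (h - l) < μ - R - l := by
    rw [hqB, div_mul_eq_mul_div, div_lt_iff₀ hD]
    nlinarith [mul_pos ha (sub_pos.mpr hab)]
  have hq1 : qB < 1 := by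
    have : qB * (h - l) < 1 * (h - l) := by nlinarith
    exact lt_of_mul_lt_mul_right this hb.le
  refine ⟨?_, key⟩
  rw [hdB]
  apply div_pos
  · nlinarith [key]
  · exact mul_pos (Real.rpow_pos_of_pos hqpos _)
      (Real.rpow_pos_of_pos (by linarith) _)
end

section
/- Let 0 < q̲ < q̄ < 1 and let V : [0,1] → ℝ be continuous and satisfy: V(q) = μ for every q ∈ [0, q̲]; V(q) = q·h + (1−q)·l for every q ∈ [q̄, 1]; V is convex on [q̲, q̄]; V(q) ≥ μ for every q ∈ [0,1]; and V(q) > q·h + (1−q)·l for every q ∈ [0, q̄). Then V is convex on [0,1] and non-decreasing on [0,1]. -/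
set_option autoImplicit false

/-- If `V` is continuous on `[0,1]`, equals `μ` on `[0,q̲]`, equals
`q h + (1−q) l` on `[q̄,1]`, is convex on `[q̲,q̄]`, satisfies `V ≥ μ` on `[0,1]` and
`V(q) > q h + (1−q) l` on `[0,q̄)`, then `V` is convex and non-decreasing on `[0,1]`. -/
theorem stmt_13 (l μ h : ℝ)
    (hl : 0 < l) (hlμ : l < μ) (hμh : μ < h)
    (a b : ℝ) (ha : 0 < a) (hab : a < b) (hb : b < 1)
    (V : ℝ → ℝ)
    (hcont : ContinuousOn V (Set.Icc 0 1))
    (h1 : ∀ q ∈ Set.Icc (0 : ℝ) a, V q = μ)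
    (h2 : ∀ q ∈ Set.Icc b 1, V q = q * h + (1 - q) * l)
    (h3 : ConvexOn ℝ (Set.Icc a b) V)
    (h4 : ∀ q ∈ Set.Icc (0 : ℝ) 1, μ ≤ V q)
    (h5 : ∀ q ∈ Set.Ico (0 : ℝ) b, q * h + (1 - q) * l < V q) :
    ConvexOn ℝ (Set.Icc (0 : ℝ) 1) V ∧ MonotoneOn V (Set.Icc (0 : ℝ) 1) := by
  -- V lies above the affine function everywhere on [0,1]
  have hL : ∀ x ∈ Set.Icc (0 : ℝ) 1, x * h + (1 - x) * l ≤ V x := by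
    intro x hx
    rcases lt_or_ge x b with hxb | hbx
    · exact (h5 x ⟨hx.1, hxb⟩).le
    · exact (h2 x ⟨hbx, hx.2⟩).ge
  have hVa : V a = μ := h1 a ⟨ha.le, le_refl a⟩
  -- Any slope ending in [b,1] is at most h - l
  have slope_ub : ∀ x z : ℝ, 0 ≤ x → b ≤ z → z ≤ 1 → x < z →
      (V z - V x) / (z - x) ≤ h - l := by
    intro x z hx hbz hz1 hxz
    have hVz : V z = z * h + (1 - z) * l := h2 z ⟨hbz, hz1⟩
    have hVx : x * h + (1 - x) * l ≤ V x := hL x ⟨hx, by linarith⟩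
    rw [div_le_iff₀ (by linarith)]
    nlinarith
  -- slope monotonicity on [0,1]
  have key : ∀ x y z : ℝ, x ∈ Set.Icc (0 : ℝ) 1 → z ∈ Set.Icc (0 : ℝ) 1 →
      x < y → y < z → (V y - V x) / (y - x) ≤ (V z - V y) / (z - y) := by
    intro x y z hx hz hxy hyz
    rcases le_or_gt y a with hya | hay
    · -- y ≤ a : left slope is 0, right slope nonneg
      have hVx : V x = μ := h1 x ⟨hx.1, by linarith⟩
      have hVy : V y = μ := h1 y ⟨by linarith [hx.1], hya⟩
      have hVz : μ ≤ V z := h4 z hz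
      rw [hVx, hVy]
      simp only [sub_self, zero_div]
      apply div_nonneg <;> linarith
    rcases le_or_gt b y with hby | hyb
    · -- b ≤ y : right slope is h - l, left slope ≤ h - l
      have hVy : V y = y * h + (1 - y) * l := h2 y ⟨hby, by linarith [hz.2]⟩
      have hVz : V z = z * h + (1 - z) * l := h2 z ⟨by linarith, hz.2⟩
      have h1' := slope_ub x y hx.1 hby (by linarith [hz.2]) hxy
      have h2' : (V z - V y) / (z - y) = h - l := by
        rw [hVy, hVz, div_eq_iff (by linarith : z - y ≠ 0)]
        ring
      linarith
    -- a < y < b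
    · set x' := max x a with hx'def
      have hx'y : x' < y := max_lt hxy hay
      have hx'a : a ≤ x' := le_max_right _ _
      have step1 : (V y - V x) / (y - x) ≤ (V y - V x') / (y - x') := by
        rcases le_total x a with h' | h'
        · have hx'eq : x' = a := max_eq_right h'
          have hVx : V x = μ := h1 x ⟨hx.1, h'⟩
          have hVy : μ ≤ V y := h4 y ⟨by linarith [hx.1], by linarith [hz.2]⟩
          rw [hx'eq, hVx, hVa]
          apply div_le_div_of_nonneg_left (by linarith) (by linarith) (by linarith)
        · have hx'eq : x' = x := max_eq_left h'
          rw [hx'eq]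
      rcases le_or_gt z b with hzb | hbz
      · -- x', y, z all in [a,b]
        have hmain := h3.slope_mono_adjacent ⟨hx'a, by linarith⟩
          ⟨by linarith, hzb⟩ hx'y hyz
        linarith
      · -- z > b : compare with slope to b
        have hsyb := h3.slope_mono_adjacent (x := x') (z := b)
          ⟨hx'a, by linarith⟩ ⟨hab.le, le_refl b⟩ hx'y hyb
        have hub : (V b - V y) / (b - y) ≤ h - l :=
          slope_ub y b (by linarith [hx.1]) (le_refl b) hb.le hyb
        have hub' : V b - V y ≤ (h - l) * (b - y) := by
          rw [div_le_iff₀ (by linarith : (0:ℝ) < b - y)] at hub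
          linarith [hub]
        have hVz : V z = z * h + (1 - z) * l := h2 z ⟨hbz.le, hz.2⟩
        have hVb : V b = b * h + (1 - b) * l := h2 b ⟨le_refl b, hb.le⟩
        have hzb' : V z - V b = (h - l) * (z - b) := by rw [hVz, hVb]; ring
        have hstep2 : (V b - V y) / (b - y) ≤ (V z - V y) / (z - y) := by
          rw [div_le_div_iff₀ (by linarith) (by linarith)]
          have hmul := mul_le_mul_of_nonneg_right hub' (by linarith : (0:ℝ) ≤ z - b)
          nlinarith [hmul, hzb']
        linarith
  have hconv : ConvexOn ℝ (Set.Icc (0 : ℝ) 1) V :=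
    convexOn_of_slope_mono_adjacent (convex_Icc 0 1)
      (fun {x y z} hx hz hxy hyz => key x y z hx hz hxy hyz)
  refine ⟨hconv, ?_⟩
  intro x hx y hy hxy
  rcases eq_or_lt_of_le hxy with rfl | hxy'
  · exact le_refl _
  have hy0 : 0 < y := lt_of_le_of_lt hx.1 hxy'
  rcases eq_or_lt_of_le hx.1 with hx0 | hx0
  · -- x = 0
    have hV0 : V x = μ := h1 x ⟨hx.1, by linarith⟩
    rw [hV0]
    exact h4 y hy
  · -- 0 < x < y : use convex combination x = (1 - x/y)·0 + (x/y)·y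
    set t := x / y with htdef
    have ht0 : 0 < t := div_pos hx0 hy0
    have ht1 : t ≤ 1 := by
      rw [div_le_one hy0]; exact hxy
    have hc := hconv.2 (Set.left_mem_Icc.mpr (by norm_num)) hy
      (by linarith : (0:ℝ) ≤ 1 - t) ht0.le (by ring)
    have hcomb : (1 - t) • (0:ℝ) + t • y = x := by
      simp only [smul_eq_mul, mul_zero, zero_add]
      exact div_mul_cancel₀ x hy0.ne'
    rw [hcomb] at hc
    have hV0 : V 0 = μ := h1 0 ⟨le_refl 0, ha.le⟩
    rw [hV0] at hc
    have hVx : μ ≤ V x := h4 x hx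
    have hc' : V x ≤ (1 - t) * μ + t * V y := by simpa [smul_eq_mul] using hc
    nlinarith [hc', hVx, h4 y hy]
end

section
/- Let q̄ ∈ (0,1), let 0 < δ ≤ min(q̄, 1−q̄), set c₀ := min( 1/( ρ + (1/16)·((h−l)/(σδ))² ), 1 ), and define v(q) := c₀·( 1 − (q−q̄)²/δ² ). Then for every q ∈ [q̄−δ, q̄+δ] one has ρ·v(q) − (1/2)·((h−l)/σ)²·q²·(1−q)²·v''(q) ≤ 1 and 0 ≤ v(q) ≤ c₀ ≤ 1; moreover v(q̄−δ) = v(q̄+δ) = 0 and v(q̄) = c₀ > 0. -/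
set_option autoImplicit false

/-
The test function is a downward parabola of height `c₀` vanishing at `q̄ ± δ`, so its second
derivative is the constant `-2c₀/δ²`. On `[q̄-δ, q̄+δ] ⊆ [0,1]` we have `q²(1-q)² ≤ 1/16`, hence
the operator is at most `ρc₀ + ((h-l)/σ)² c₀/(16δ²)`, which is `≤ 1` by the choice of `c₀`.
-/

lemma sq_mul_one_sub_sq_le {q : ℝ} (hq₀ : 0 ≤ q) (hq₁ : q ≤ 1) :
    q ^ 2 * (1 - q) ^ 2 ≤ 1 / 16 := by
  nlinarith [sq_nonneg (q - 1 / 2), mul_nonneg hq₀ (sub_nonneg.2 hq₁)]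

lemma min_one_div_one_mul_le_one {P : ℝ} (hP : 0 < P) : min (1 / P) 1 * P ≤ 1 :=
  (le_div_iff₀ hP).1 (min_le_left _ _)

lemma sq_div_sq_le_one_of_mem_Icc {a d q : ℝ} (hq : q ∈ Set.Icc (a - d) (a + d)) :
    (q - a) ^ 2 / d ^ 2 ≤ 1 :=
  div_le_one_of_le₀ (sq_le_sq' (by linarith [hq.1]) (by linarith [hq.2])) (sq_nonneg d)

section Parabola

variable (c a d : ℝ)

lemma deriv_parabola :
    deriv (fun q : ℝ => c * (1 - (q - a) ^ 2 / d ^ 2)) = fun q => -(2 * c / d ^ 2) * (q - a) := by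
  ext q
  simp only [differentiableAt_const, deriv_const_mul_field', deriv_const_sub', deriv_div_const,
    differentiableAt_fun_id, DifferentiableAt.fun_sub, deriv_fun_pow, Nat.cast_ofNat,
    Nat.add_one_sub_one, pow_one, deriv_fun_sub, deriv_id'', deriv_const', sub_zero, mul_one,
    mul_neg, neg_mul, neg_inj]
  ring

lemma deriv_deriv_parabola (q : ℝ) :
    deriv (deriv fun q : ℝ => c * (1 - (q - a) ^ 2 / d ^ 2)) q = -(2 * c / d ^ 2) := by
  rw [deriv_parabola]
  simp

variable {c a d}

lemma parabola_nonneg (hc : 0 ≤ c) {q : ℝ} (hq : q ∈ Set.Icc (a - d) (a + d)) :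
    0 ≤ c * (1 - (q - a) ^ 2 / d ^ 2) :=
  mul_nonneg hc (sub_nonneg.2 (sq_div_sq_le_one_of_mem_Icc hq))

lemma parabola_le (hc : 0 ≤ c) (q : ℝ) : c * (1 - (q - a) ^ 2 / d ^ 2) ≤ c :=
  mul_le_of_le_one_right hc (sub_le_self _ (by positivity))

end Parabola

lemma parabola_generator_le_one {ρ K c a d q : ℝ} (hρ : 0 ≤ ρ) (hc : 0 ≤ c)
    (hcP : c * (ρ + 1 / 16 * (K / d) ^ 2) ≤ 1) (hq₀ : 0 ≤ q) (hq₁ : q ≤ 1) :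
    ρ * (c * (1 - (q - a) ^ 2 / d ^ 2)) - 1 / 2 * K ^ 2 * q ^ 2 * (1 - q) ^ 2 * -(2 * c / d ^ 2)
      ≤ 1 := by
  have hρt : 0 ≤ ρ * c * ((q - a) ^ 2 / d ^ 2) := by positivity
  have hquart : K ^ 2 * c / d ^ 2 * (q ^ 2 * (1 - q) ^ 2) ≤ K ^ 2 * c / d ^ 2 * (1 / 16) :=
    mul_le_mul_of_nonneg_left (sq_mul_one_sub_sq_le hq₀ hq₁) (by positivity)
  calc ρ * (c * (1 - (q - a) ^ 2 / d ^ 2)) - 1 / 2 * K ^ 2 * q ^ 2 * (1 - q) ^ 2 * -(2 * c / d ^ 2)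
        = ρ * c - ρ * c * ((q - a) ^ 2 / d ^ 2) + K ^ 2 * c / d ^ 2 * (q ^ 2 * (1 - q) ^ 2) := by
          ring
    _ ≤ ρ * c + K ^ 2 * c / d ^ 2 * (1 / 16) := by linarith
    _ = c * (ρ + 1 / 16 * (K / d) ^ 2) := by ring
    _ ≤ 1 := hcP

theorem stmt_14_general (l h ρ σ : ℝ)
    (hρ : 0 < ρ)
    (qbar δ : ℝ)
    (hδ : 0 < δ) (hδle : δ ≤ min qbar (1 - qbar))
    (c₀ : ℝ)
    (hc₀ : c₀ = min (1 / (ρ + (1 / 16) * ((h - l) / (σ * δ)) ^ 2)) 1)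
    (v : ℝ → ℝ)
    (hv : ∀ q : ℝ, v q = c₀ * (1 - (q - qbar) ^ 2 / δ ^ 2)) :
    (∀ q ∈ Set.Icc (qbar - δ) (qbar + δ),
      ρ * v q - (1 / 2) * ((h - l) / σ) ^ 2 * q ^ 2 * (1 - q) ^ 2 * deriv (deriv v) q ≤ 1
      ∧ 0 ≤ v q ∧ v q ≤ c₀ ∧ c₀ ≤ 1)
    ∧ v (qbar - δ) = 0 ∧ v (qbar + δ) = 0 ∧ v qbar = c₀ ∧ 0 < c₀ := by
  obtain rfl : v = fun q => c₀ * (1 - (q - qbar) ^ 2 / δ ^ 2) := funext hv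
  rw [← div_div] at hc₀
  have hP : 0 < ρ + 1 / 16 * ((h - l) / σ / δ) ^ 2 := by positivity
  have hc₀pos : 0 < c₀ := hc₀ ▸ lt_min (by positivity) one_pos
  have hc₀P := hc₀ ▸ min_one_div_one_mul_le_one hP
  have hδq : δ ≤ qbar := hδle.trans (min_le_left _ _)
  have hδq' : δ ≤ 1 - qbar := hδle.trans (min_le_right _ _)
  refine ⟨fun q hq => ⟨?_, parabola_nonneg hc₀pos.le hq, parabola_le hc₀pos.le q,
    hc₀ ▸ min_le_right _ _⟩, ?_, ?_, by simp, hc₀pos⟩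
  · rw [deriv_deriv_parabola]
    exact parabola_generator_le_one hρ.le hc₀pos.le hc₀P (by linarith [hq.1]) (by linarith [hq.2])
  all_goals field_simp; ring

/-- With `c₀ = min( 1/(ρ + (1/16)((h−l)/(σδ))²), 1 )` and
`v(q) = c₀(1 − (q−q̄)²/δ²)`, one has
`ρ v(q) − ½((h−l)/σ)² q²(1−q)² v''(q) ≤ 1` and `0 ≤ v(q) ≤ c₀ ≤ 1` on
`[q̄−δ, q̄+δ]`; moreover `v(q̄−δ) = v(q̄+δ) = 0` and `v(q̄) = c₀ > 0`. -/
theorem stmt_14 (l μ h ρ σ : ℝ)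
    (hl : 0 < l) (hlμ : l < μ) (hμh : μ < h) (hρ : 0 < ρ) (hσ : 0 < σ)
    (qbar δ : ℝ) (hqbar : qbar ∈ Set.Ioo (0 : ℝ) 1)
    (hδ : 0 < δ) (hδle : δ ≤ min qbar (1 - qbar))
    (c₀ : ℝ)
    (hc₀ : c₀ = min (1 / (ρ + (1 / 16) * ((h - l) / (σ * δ)) ^ 2)) 1)
    (v : ℝ → ℝ)
    (hv : ∀ q : ℝ, v q = c₀ * (1 - (q - qbar) ^ 2 / δ ^ 2)) :
    (∀ q ∈ Set.Icc (qbar - δ) (qbar + δ),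
      ρ * v q - (1 / 2) * ((h - l) / σ) ^ 2 * q ^ 2 * (1 - q) ^ 2 * deriv (deriv v) q ≤ 1
      ∧ 0 ≤ v q ∧ v q ≤ c₀ ∧ c₀ ≤ 1)
    ∧ v (qbar - δ) = 0 ∧ v (qbar + δ) = 0 ∧ v qbar = c₀ ∧ 0 < c₀ :=
  stmt_14_general l h ρ σ hρ qbar δ hδ hδle c₀ hc₀ v hv
end

section
/- Let 0 < ε ≤ 1/4 and set M := (ρμ/24)·(σ/(h−l))². Define v(q) := μ + M·max(q/ε − 1, 0)³ for q ∈ [0, 2ε]. Then v is twice continuously differentiable on (0, 2ε) with v''(q) = (6M/ε²)·max(q/ε − 1, 0), and for every q ∈ (0, 2ε) one has ρ·v(q) − (1/2)·((h−l)/σ)²·q²·(1−q)²·v''(q) ≥ ρμ/2 > 0. -/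
set_option autoImplicit false

/-! `v` is `μ` plus `M` times the cube of the ramp `max (q/ε − 1) 0`, and `y ↦ max y 0 ^ (n + 1)`
is `Cⁿ`, so `v` is `C²`. On `(0, 2ε)` the ramp is at most `1`, `q² ≤ 4ε²` and `(1 − q)² ≤ 1`, so
the diffusion term is at most `12 ((h−l)/σ)² M = ρμ/2`, while `ρ v ≥ ρμ`. -/

open Set

theorem hasDerivAt_pow_max_zero {n : ℕ} (hn : n ≠ 0) (x : ℝ) :
    HasDerivAt (fun y : ℝ => max y 0 ^ (n + 1)) ((n + 1) * max x 0 ^ n) x := by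
  rcases lt_trichotomy x 0 with hx | rfl | hx
  · have hzero : (fun _ : ℝ => (0 : ℝ)) =ᶠ[nhds x] fun y => max y 0 ^ (n + 1) := by
      filter_upwards [Iio_mem_nhds hx] with y hy
      simp [max_eq_right (mem_Iio.mp hy).le]
    simpa [max_eq_right hx.le, hn] using
      (hasDerivAt_const x (0 : ℝ)).congr_of_eventuallyEq hzero.symm
  · have hleft : HasDerivWithinAt (fun y : ℝ => max y 0 ^ (n + 1)) 0 (Iic 0) 0 :=
      (hasDerivWithinAt_const 0 _ (0 : ℝ)).congr
        (fun y hy => by simp [max_eq_right (mem_Iic.mp hy)]) (by simp)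
    have hright : HasDerivWithinAt (fun y : ℝ => max y 0 ^ (n + 1)) 0 (Ici 0) 0 := by
      simpa [hn] using ((hasDerivAt_pow (n + 1) (0 : ℝ)).hasDerivWithinAt (s := Ici 0)).congr
        (fun y hy => by rw [max_eq_left hy]) (by simp)
    simpa [hn, ← hasDerivWithinAt_univ] using hleft.union hright
  · have hpow : (fun y : ℝ => y ^ (n + 1)) =ᶠ[nhds x] fun y => max y 0 ^ (n + 1) := by
      filter_upwards [Ioi_mem_nhds hx] with y hy
      rw [max_eq_left (mem_Ioi.mp hy).le]
    simpa [max_eq_left hx.le] using (hasDerivAt_pow (n + 1) x).congr_of_eventuallyEq hpow.symm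

theorem contDiff_pow_max_zero (n : ℕ) : ContDiff ℝ n fun y : ℝ => max y 0 ^ (n + 1) := by
  induction n with
  | zero => exact contDiff_zero.mpr ((continuous_id.max continuous_const).pow 1)
  | succ n ih =>
    have hderiv := hasDerivAt_pow_max_zero n.succ_ne_zero
    rw [Nat.cast_succ, contDiff_succ_iff_deriv]
    refine ⟨fun x => (hderiv x).differentiableAt, by simp, ?_⟩
    rw [funext fun x => (hderiv x).deriv]
    exact contDiff_const.mul ih

theorem deriv_pow_max_div_sub_one {n : ℕ} (hn : n ≠ 0) (ε : ℝ) :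
    deriv (fun q : ℝ => max (q / ε - 1) 0 ^ (n + 1)) =
      fun q => (n + 1) / ε * max (q / ε - 1) 0 ^ n := by
  funext q
  have hinner : HasDerivAt (fun q : ℝ => q / ε - 1) (1 / ε) q := by
    simpa using ((hasDerivAt_id q).div_const ε).sub_const 1
  have hcomp := (hasDerivAt_pow_max_zero hn (q / ε - 1)).comp q hinner
  exact (hcomp.congr_deriv (by ring : _ = (n + 1) / ε * max (q / ε - 1) 0 ^ n)).deriv

theorem sq_mul_one_sub_sq_mul_max_le {ε q : ℝ} (hε : ε ≤ 1 / 4) (hq : q ∈ Ioo 0 (2 * ε)) :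
    q ^ 2 * (1 - q) ^ 2 * max (q / ε - 1) 0 ≤ 4 * ε ^ 2 := by
  obtain ⟨hq0, hq2ε⟩ := hq
  have hε0 : 0 < ε := by linarith
  have hramp : max (q / ε - 1) 0 ≤ 1 :=
    max_le (by rw [sub_le_iff_le_add, div_le_iff₀ hε0]; linarith) zero_le_one
  have hone_sub : (1 - q) ^ 2 ≤ 1 := by nlinarith
  calc _ ≤ (2 * ε) ^ 2 * 1 * 1 := by gcongr
    _ = 4 * ε ^ 2 := by ring

theorem stmt_15_general (l μ h ρ σ : ℝ)
    (hl : 0 < l) (hlμ : l < μ) (hμh : μ < h) (hρ : 0 < ρ) (hσ : 0 < σ)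
    (ε : ℝ) (hε' : ε ≤ 1 / 4)
    (M : ℝ) (hM : M = (ρ * μ / 24) * (σ / (h - l)) ^ 2)
    (v : ℝ → ℝ)
    (hv : ∀ q : ℝ, v q = μ + M * (max (q / ε - 1) 0) ^ 3) :
    ContDiffOn ℝ 2 v (Set.Ioo 0 (2 * ε))
    ∧ (∀ q ∈ Set.Ioo (0 : ℝ) (2 * ε),
        deriv (deriv v) q = (6 * M / ε ^ 2) * max (q / ε - 1) 0)
    ∧ (∀ q ∈ Set.Ioo (0 : ℝ) (2 * ε),
        ρ * v q - (1 / 2) * ((h - l) / σ) ^ 2 * q ^ 2 * (1 - q) ^ 2 * deriv (deriv v) q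
          ≥ ρ * μ / 2)
    ∧ 0 < ρ * μ / 2 := by
  have hμ : 0 < μ := hl.trans hlμ
  have hM0 : 0 ≤ M := by rw [hM]; positivity
  have hDM : ((h - l) / σ) ^ 2 * M = ρ * μ / 24 := by
    rw [hM]; field_simp [(sub_pos.mpr (hlμ.trans hμh)).ne']
  obtain rfl : v = fun q => μ + M * max (q / ε - 1) 0 ^ 3 := funext hv
  have hv'' : deriv (deriv fun q => μ + M * max (q / ε - 1) 0 ^ 3) =
      fun q => 6 * M / ε ^ 2 * max (q / ε - 1) 0 := by
    rw [deriv_const_add', deriv_const_mul_field', deriv_pow_max_div_sub_one two_ne_zero,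
      deriv_const_mul_field', deriv_const_mul_field', deriv_pow_max_div_sub_one one_ne_zero]
    funext q
    push_cast
    ring
  refine ⟨?_, fun q _ => by rw [hv''], fun q hq => ?_, by positivity⟩
  · exact (contDiff_const.add (contDiff_const.mul ((contDiff_pow_max_zero 2).comp
      ((contDiff_id.div_const ε).sub contDiff_const)))).contDiffOn
  · have hε : 0 < ε := by linarith [hq.1, hq.2]
    have hdiffusion : 1 / 2 * ((h - l) / σ) ^ 2 * q ^ 2 * (1 - q) ^ 2 *
        (6 * M / ε ^ 2 * max (q / ε - 1) 0) ≤ ρ * μ / 2 := calc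
      _ = 3 * (((h - l) / σ) ^ 2 * M) * (q ^ 2 * (1 - q) ^ 2 * max (q / ε - 1) 0) / ε ^ 2 := by
        ring
      _ ≤ 3 * (ρ * μ / 24) * (4 * ε ^ 2) / ε ^ 2 := by
        rw [hDM]; gcongr 3 * (ρ * μ / 24) * ?_ / _; exact sq_mul_one_sub_sq_mul_max_le hε' hq
      _ = ρ * μ / 2 := by field_simp; ring
    have hprofile : ρ * μ ≤ ρ * (μ + M * max (q / ε - 1) 0 ^ 3) := by
      gcongr; exact le_add_of_nonneg_right (by positivity)
    rw [hv'']
    linarith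

/-- With `M = (ρμ/24)(σ/(h−l))²` and
`v(q) = μ + M max(q/ε − 1, 0)³` on `[0,2ε]`, the function `v` is twice continuously
differentiable on `(0,2ε)` with `v''(q) = (6M/ε²) max(q/ε − 1, 0)`, and
`ρ v(q) − ½((h−l)/σ)² q²(1−q)² v''(q) ≥ ρμ/2 > 0` for every `q ∈ (0,2ε)`. -/
theorem stmt_15 (l μ h ρ σ : ℝ)
    (hl : 0 < l) (hlμ : l < μ) (hμh : μ < h) (hρ : 0 < ρ) (hσ : 0 < σ)
    (ε : ℝ) (hε : 0 < ε) (hε' : ε ≤ 1 / 4)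
    (M : ℝ) (hM : M = (ρ * μ / 24) * (σ / (h - l)) ^ 2)
    (v : ℝ → ℝ)
    (hv : ∀ q : ℝ, v q = μ + M * (max (q / ε - 1) 0) ^ 3) :
    ContDiffOn ℝ 2 v (Set.Ioo 0 (2 * ε))
    ∧ (∀ q ∈ Set.Ioo (0 : ℝ) (2 * ε),
        deriv (deriv v) q = (6 * M / ε ^ 2) * max (q / ε - 1) 0)
    ∧ (∀ q ∈ Set.Ioo (0 : ℝ) (2 * ε),
        ρ * v q - (1 / 2) * ((h - l) / σ) ^ 2 * q ^ 2 * (1 - q) ^ 2 * deriv (deriv v) q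
          ≥ ρ * μ / 2)
    ∧ 0 < ρ * μ / 2 :=
  stmt_15_general l μ h ρ σ hl hlμ hμh hρ hσ ε hε' M hM v hv
end

section
/- Set p̂ := (μ−l)/(h−l), let C : [0,1] → [0,∞) be bounded, and let C̄ be an upper bound for C on [p̂−ε, p̂+ε]. Let M > 0 and ε > 0 satisfy ε ≤ p̂/2, ε ≤ (1−p̂)/2, ρ·ε ≤ 1, and ε < ((h−l)/σ)²·p̂²·(1−p̂)²·M / ( 32·(15M + C̄ + ρμ) ). Define r(q) := μ + M·( −ε/2 + (q − (p̂−ε))²/ε ). Then r''(q) = 2M/ε, and for every q ∈ [p̂−ε, p̂+ε] one has ρ·r(q) − (1/2)·((h−l)/σ)²·q²·(1−q)²·r''(q) + C(q) < 0. -/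
set_option autoImplicit false

/-!
On `[p̂ - ε, p̂ + ε]` the factor `q (1 - q)` stays above `p̂ (1 - p̂) / 4`, so the diffusion term
`½ ((h-l)/σ)² q² (1-q)² r''(q)` is at least `((h-l)/σ)² p̂² (1-p̂)² M / (16 ε)`, which the
smallness condition on `ε` makes larger than `2 (15 M + C̄ + ρ μ)`. Meanwhile `ρ r(q) + C(q)` is at most
`ρ μ + 4 M + C̄`, because `r(q) - μ ≤ 4 M ε` and `ρ ε ≤ 1`.
-/

open Set

theorem deriv_deriv_add_mul_sub_sq (c k a : ℝ) :
    deriv (deriv fun q : ℝ => c + k * (q - a) ^ 2) = fun _ => 2 * k := by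
  have hderiv : deriv (fun q : ℝ => c + k * (q - a) ^ 2) = fun q => k * (2 * (q - a)) := by
    funext q
    simp
  funext q
  rw [hderiv]
  simp [mul_comm]

theorem sq_mul_one_sub_sq_ge_of_mem_Icc {p ε q : ℝ} (hε₁ : ε ≤ p / 2) (hε₂ : ε ≤ (1 - p) / 2)
    (hq : q ∈ Icc (p - ε) (p + ε)) :
    p ^ 2 * (1 - p) ^ 2 / 16 ≤ q ^ 2 * (1 - q) ^ 2 := by
  obtain ⟨hq₁, hq₂⟩ := hq
  have hε : 0 ≤ ε := by linarith
  have hprod : p / 2 * ((1 - p) / 2) ≤ q * (1 - q) :=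
    mul_le_mul (by linarith) (by linarith) (by linarith) (by linarith)
  calc p ^ 2 * (1 - p) ^ 2 / 16 = (p / 2 * ((1 - p) / 2)) ^ 2 := by ring
    _ ≤ (q * (1 - q)) ^ 2 := pow_le_pow_left₀ (by nlinarith) hprod 2
    _ = q ^ 2 * (1 - q) ^ 2 := by ring

theorem mul_neg_half_add_sq_div_le {M ε a q : ℝ} (hM : 0 ≤ M) (hε : 0 < ε)
    (hqa : 0 ≤ q - a) (hqa' : q - a ≤ 2 * ε) :
    M * (-ε / 2 + (q - a) ^ 2 / ε) ≤ 4 * M * ε := by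
  have hsq : (q - a) ^ 2 / ε ≤ 4 * ε := by
    rw [div_le_iff₀ hε]
    nlinarith
  nlinarith

theorem pos_of_lt_div_mul {ε X S : ℝ} (hε : 0 < ε) (hX : 0 ≤ X) (h : ε < X / (32 * S)) :
    0 < S := by
  by_contra! hS
  exact (div_nonpos_of_nonneg_of_nonpos hX (by linarith)).not_gt (hε.trans h)

theorem stmt_16_general (l μ h ρ σ : ℝ)
    (hρ : 0 < ρ)
    (phat : ℝ)
    (M ε : ℝ) (hM : 0 < M) (hε : 0 < ε)
    (C : ℝ → ℝ) (Cbar : ℝ)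
    (hCbar : ∀ q ∈ Set.Icc (phat - ε) (phat + ε), C q ≤ Cbar)
    (hε1 : ε ≤ phat / 2) (hε2 : ε ≤ (1 - phat) / 2) (hε3 : ρ * ε ≤ 1)
    (hε4 : ε < ((h - l) / σ) ^ 2 * phat ^ 2 * (1 - phat) ^ 2 * M
      / (32 * (15 * M + Cbar + ρ * μ)))
    (r : ℝ → ℝ)
    (hr : ∀ q : ℝ, r q = μ + M * (-ε / 2 + (q - (phat - ε)) ^ 2 / ε)) :
    (∀ q : ℝ, deriv (deriv r) q = 2 * M / ε)
    ∧ (∀ q ∈ Set.Icc (phat - ε) (phat + ε),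
        ρ * r q - (1 / 2) * ((h - l) / σ) ^ 2 * q ^ 2 * (1 - q) ^ 2 * deriv (deriv r) q
          + C q < 0) := by
  have hr'' : ∀ q, deriv (deriv r) q = 2 * M / ε := by
    have hr_eq : r = fun q => (μ - M * ε / 2) + M / ε * (q - (phat - ε)) ^ 2 := by
      funext q
      rw [hr]
      ring
    intro q
    rw [hr_eq, deriv_deriv_add_mul_sub_sq]
    ring
  refine ⟨hr'', fun q hq => ?_⟩
  set K := ((h - l) / σ) ^ 2
  set S := 15 * M + Cbar + ρ * μ
  have hS : 0 < S := pos_of_lt_div_mul hε (by positivity) hε4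
  have hdiffusion : 2 * S < K * phat ^ 2 * (1 - phat) ^ 2 * M / (16 * ε) := by
    rw [lt_div_iff₀ (by positivity)]
    rw [lt_div_iff₀ (by positivity)] at hε4
    linarith
  have hdiffusion' : K * phat ^ 2 * (1 - phat) ^ 2 * M / (16 * ε)
      ≤ 1 / 2 * K * q ^ 2 * (1 - q) ^ 2 * (2 * M / ε) := by
    have := sq_mul_one_sub_sq_ge_of_mem_Icc hε1 hε2 hq
    calc K * phat ^ 2 * (1 - phat) ^ 2 * M / (16 * ε)
        = K * M / ε * (phat ^ 2 * (1 - phat) ^ 2 / 16) := by ring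
      _ ≤ K * M / ε * (q ^ 2 * (1 - q) ^ 2) := by gcongr
      _ = 1 / 2 * K * q ^ 2 * (1 - q) ^ 2 * (2 * M / ε) := by ring
  have hdrift : ρ * r q ≤ ρ * μ + 4 * M := by
    have := mul_neg_half_add_sq_div_le hM.le hε (q := q) (a := phat - ε)
      (by linarith [hq.1]) (by linarith [hq.2])
    calc ρ * r q = ρ * μ + ρ * (M * (-ε / 2 + (q - (phat - ε)) ^ 2 / ε)) := by rw [hr]; ring
      _ ≤ ρ * μ + ρ * (4 * M * ε) := by gcongr
      _ = ρ * μ + 4 * M * (ρ * ε) := by ring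
      _ ≤ ρ * μ + 4 * M * 1 := by gcongr
      _ = ρ * μ + 4 * M := by ring
  rw [hr'' q]
  linarith [hCbar q hq]

/-- With `p̂ = (μ−l)/(h−l)` and
`r(q) = μ + M(−ε/2 + (q − (p̂−ε))²/ε)`, under the stated smallness conditions on `ε`,
one has `r''(q) = 2M/ε` and
`ρ r(q) − ½((h−l)/σ)² q²(1−q)² r''(q) + C(q) < 0` for all `q ∈ [p̂−ε, p̂+ε]`. -/
theorem stmt_16 (l μ h ρ σ : ℝ)
    (hl : 0 < l) (hlμ : l < μ) (hμh : μ < h) (hρ : 0 < ρ) (hσ : 0 < σ)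
    (phat : ℝ) (hphat : phat = (μ - l) / (h - l))
    (M ε : ℝ) (hM : 0 < M) (hε : 0 < ε)
    (C : ℝ → ℝ) (Cbar : ℝ)
    (hC0 : ∀ q ∈ Set.Icc (0 : ℝ) 1, 0 ≤ C q)
    (hCbd : ∃ B : ℝ, ∀ q ∈ Set.Icc (0 : ℝ) 1, C q ≤ B)
    (hCbar : ∀ q ∈ Set.Icc (phat - ε) (phat + ε), C q ≤ Cbar)
    (hε1 : ε ≤ phat / 2) (hε2 : ε ≤ (1 - phat) / 2) (hε3 : ρ * ε ≤ 1)
    (hε4 : ε < ((h - l) / σ) ^ 2 * phat ^ 2 * (1 - phat) ^ 2 * M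
      / (32 * (15 * M + Cbar + ρ * μ)))
    (r : ℝ → ℝ)
    (hr : ∀ q : ℝ, r q = μ + M * (-ε / 2 + (q - (phat - ε)) ^ 2 / ε)) :
    (∀ q : ℝ, deriv (deriv r) q = 2 * M / ε)
    ∧ (∀ q ∈ Set.Icc (phat - ε) (phat + ε),
        ρ * r q - (1 / 2) * ((h - l) / σ) ^ 2 * q ^ 2 * (1 - q) ^ 2 * deriv (deriv r) q
          + C q < 0) :=
  stmt_16_general l μ h ρ σ hρ phat M ε hM hε C Cbar hCbar hε1 hε2 hε3 hε4 r hr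
end

section
/- Let l̃₁, l̃₂ be reals with l̃₁ ≤ l̃₂ < h and μ ≤ h. Then for every q ∈ [0,1]: max( μ, q·h + (1−q)·l̃₁ ) ≤ max( μ, q·h + (1−q)·l̃₂ ) ≤ ((h−l̃₂)/(h−l̃₁))·max( μ, q·h + (1−q)·l̃₁ ) + ((l̃₂−l̃₁)/(h−l̃₁))·h. -/
set_option autoImplicit false

/-! The map `x ↦ q h + (1 - q) x` is affine and fixes `h`, so it carries the convex combination
`l₂ = t l₁ + (1 - t) h`, with `t = (h - l₂)/(h - l₁)`, to the same combination of the images.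
Taking the maximum with `μ ≤ h` only helps, since `μ ≤ t μ + (1 - t) h`. -/

theorem affine_fixing_map_convexComb {𝕜 : Type*} [Field 𝕜] {q h l₁ l₂ : 𝕜} (h1h : l₁ ≠ h) :
    q * h + (1 - q) * l₂
      = (h - l₂) / (h - l₁) * (q * h + (1 - q) * l₁) + (1 - (h - l₂) / (h - l₁)) * h := by
  have : h - l₁ ≠ 0 := sub_ne_zero.mpr h1h.symm
  field_simp
  ring

theorem max_le_convexComb_max {𝕜 : Type*} [Field 𝕜] [LinearOrder 𝕜] [IsStrictOrderedRing 𝕜]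
    {μ h x y t : 𝕜} (ht₀ : 0 ≤ t) (ht₁ : t ≤ 1) (hμh : μ ≤ h)
    (hy : y ≤ t * x + (1 - t) * h) :
    max μ y ≤ t * max μ x + (1 - t) * h := by
  have h1t : 0 ≤ 1 - t := sub_nonneg.mpr ht₁
  apply max_le
  · calc μ = t * μ + (1 - t) * μ := by ring
      _ ≤ t * max μ x + (1 - t) * h := by gcongr; exact le_max_left μ x
  · calc y ≤ t * x + (1 - t) * h := hy
      _ ≤ t * max μ x + (1 - t) * h := by gcongr; exact le_max_right μ x

/-- For `l̃₁ ≤ l̃₂ < h` and `μ ≤ h`, for every `q ∈ [0,1]`,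
`max(μ, q h + (1−q) l̃₁) ≤ max(μ, q h + (1−q) l̃₂)
  ≤ ((h−l̃₂)/(h−l̃₁)) max(μ, q h + (1−q) l̃₁) + ((l̃₂−l̃₁)/(h−l̃₁)) h`. -/
theorem stmt_17 (μ h l₁ l₂ : ℝ)
    (h12 : l₁ ≤ l₂) (h2h : l₂ < h) (hμh : μ ≤ h) :
    ∀ q ∈ Set.Icc (0 : ℝ) 1,
      max μ (q * h + (1 - q) * l₁) ≤ max μ (q * h + (1 - q) * l₂)
      ∧ max μ (q * h + (1 - q) * l₂)
        ≤ ((h - l₂) / (h - l₁)) * max μ (q * h + (1 - q) * l₁)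
          + ((l₂ - l₁) / (h - l₁)) * h := by
  rintro q ⟨-, hq1⟩
  have h1h : 0 < h - l₁ := by linarith
  refine ⟨max_le_max le_rfl (by gcongr), ?_⟩
  have hweight : (l₂ - l₁) / (h - l₁) = 1 - (h - l₂) / (h - l₁) := by
    rw [one_sub_div h1h.ne', sub_sub_sub_cancel_left]
  rw [hweight]
  apply max_le_convexComb_max (div_nonneg (by linarith) h1h.le)
    ((div_le_one h1h).mpr (by linarith)) hμh
  exact (affine_fixing_map_convexComb (by linarith)).le
end

section
/- Set p̂ := (μ−l)/(h−l). Let M > 0 satisfy (h−l)/(4M) < min(p̂, 1−p̂), set r := p̂ − (h−l)/(4M), p := p̂ + (h−l)/(4M), and define U(q) := μ + M·(q−r)². Then U(r) = μ, U'(r) = 0, U(p) = p·h + (1−p)·l, and U'(p) = h−l. Moreover, if C : [0,1] → ℝ satisfies C(q) ≥ C₁ for every q and some constant C₁ > 0, and if M·(h−l)² ≤ 16·ρ·μ·σ², then for every q ∈ [r, p] one has ρ·U(q) − (1/2)·((h−l)/σ)²·q²·(1−q)²·U''(q) + C(q) > 0. -/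
set_option autoImplicit false

/-- With `p̂ = (μ−l)/(h−l)`, `r = p̂ − (h−l)/(4M)`, `p = p̂ + (h−l)/(4M)`
and `U(q) = μ + M(q−r)²`, one has `U(r) = μ`, `U'(r) = 0`, `U(p) = p h + (1−p) l`,
`U'(p) = h − l`; and if `C ≥ C₁ > 0` on `[0,1]` and `M(h−l)² ≤ 16ρμσ²`, then
`ρ U(q) − ½((h−l)/σ)² q²(1−q)² U''(q) + C(q) > 0` for all `q ∈ [r, p]`. -/
theorem stmt_19 (l μ h ρ σ : ℝ)
    (hl : 0 < l) (hlμ : l < μ) (hμh : μ < h) (hρ : 0 < ρ) (hσ : 0 < σ)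
    (phat : ℝ) (hphat : phat = (μ - l) / (h - l))
    (M : ℝ) (hM : 0 < M)
    (hM' : (h - l) / (4 * M) < min phat (1 - phat))
    (r p : ℝ) (hr : r = phat - (h - l) / (4 * M)) (hp : p = phat + (h - l) / (4 * M))
    (U : ℝ → ℝ) (hU : ∀ q : ℝ, U q = μ + M * (q - r) ^ 2) :
    U r = μ ∧ deriv U r = 0 ∧ U p = p * h + (1 - p) * l ∧ deriv U p = h - l
    ∧ (∀ C : ℝ → ℝ, ∀ C₁ : ℝ, 0 < C₁ → (∀ q ∈ Set.Icc (0 : ℝ) 1, C₁ ≤ C q) →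
        M * (h - l) ^ 2 ≤ 16 * ρ * μ * σ ^ 2 →
        ∀ q ∈ Set.Icc r p,
          0 < ρ * U q
            - (1 / 2) * ((h - l) / σ) ^ 2 * q ^ 2 * (1 - q) ^ 2 * deriv (deriv U) q
            + C q) := by
  have hhl : 0 < h - l := by linarith
  have hUeq : U = fun q => μ + M * (q - r) ^ 2 := funext hU
  have hd1 : deriv U = fun q => M * (2 * (q - r)) := by
    funext q
    rw [hUeq]
    have h1 : HasDerivAt (fun x : ℝ => μ + M * (x - r) ^ 2) (M * (2 * (q - r))) q := by
      have := ((((hasDerivAt_id q).sub_const r).pow 2).const_mul M).const_add μ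
      simpa using this
    simpa using h1.deriv
  have hd2 : deriv (deriv U) = fun _ : ℝ => 2 * M := by
    funext q
    rw [hd1]
    have h2 : HasDerivAt (fun x : ℝ => M * (2 * (x - r))) (2 * M) q := by
      have := (((hasDerivAt_id q).sub_const r).const_mul 2).const_mul M
      simpa using this
      |>.congr_deriv (by ring)
    simpa using h2.deriv
  have hrp : p - r = (h - l) / (2 * M) := by rw [hr, hp]; ring
  have hUp : U p = p * h + (1 - p) * l := by
    rw [hU, show p - r = (h - l) / (2 * M) from hrp, hp, hphat]
    field_simp
    ring
  refine ⟨by rw [hU]; ring, by rw [hd1]; ring, hUp, ?_, ?_⟩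
  · rw [hd1]
    simp only [hrp]
    field_simp
  · intro C C₁ hC₁ hC hMσ q hq
    obtain ⟨hq1, hq2⟩ := hq
    have hmin1 : (h - l) / (4 * M) < phat := lt_of_lt_of_le hM' (min_le_left _ _)
    have hmin2 : (h - l) / (4 * M) < 1 - phat := lt_of_lt_of_le hM' (min_le_right _ _)
    have hq0 : 0 ≤ q := by rw [hr] at hq1; linarith
    have hq1' : q ≤ 1 := by rw [hp] at hq2; linarith
    have hCq : C₁ ≤ C q := hC q ⟨hq0, hq1'⟩
    rw [hd2, hU]
    have key : q ^ 2 * (1 - q) ^ 2 ≤ 1 / 16 := by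
      nlinarith [mul_nonneg hq0 (by linarith : (0:ℝ) ≤ 1 - q), sq_nonneg (q - 1/2)]
    have hσ2 : 0 < σ ^ 2 := by positivity
    have hterm : (1 / 2) * ((h - l) / σ) ^ 2 * q ^ 2 * (1 - q) ^ 2 * (2 * M) ≤ ρ * μ := by
      have h1 : (1 / 2) * ((h - l) / σ) ^ 2 * q ^ 2 * (1 - q) ^ 2 * (2 * M)
          = M * (h - l) ^ 2 * (q ^ 2 * (1 - q) ^ 2) / σ ^ 2 := by
        field_simp
      rw [h1, div_le_iff₀ hσ2]
      nlinarith [mul_nonneg hM.le (sq_nonneg (h - l)), key]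
    have hnn : 0 ≤ ρ * M * (q - r) ^ 2 :=
      mul_nonneg (mul_nonneg hρ.le hM.le) (sq_nonneg (q - r))
    simp only []
    linarith [hterm, hCq, hnn, hC₁]
end
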